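/- Let μ_t = (1/(1+t)) δ_{−t} + (t/(1+t)) δ_{1−t} for t > 0. Then (μ_t)_{t>0} is non-decreasing in the WDS order, but the translated family (μ̂_t)_{t>0}, where μ̂_t is the image of μ_t under y ↦ y − 1, is not non-decreasing in the WDS order. Hence WDS ordering is not preserved by deterministic translations. -/

import Mathlib

open MeasureTheory Set Filter

noncomputable def meanM (μ : Measure ℝ) : ℝ := ∫ y, y ∂μ

noncomputable def rSupE (μ : Measure ℝ) : EReal :=
  sInf ((fun z : ℝ => (z : EReal)) '' {z : ℝ | μ (Ici z) = 0})

noncomputable def psiWds (μ : Measure ℝ) (x : ℝ) : EReal :=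
  if (x : EReal) < rSupE μ then
    ((((∫ y in Ici x, y ∂μ) - meanM μ) / (μ (Ici x)).toReal : ℝ) : EReal)
  else ⊤

noncomputable def Kfun (μ : Measure ℝ) (x : ℝ) : ℝ :=
  (∫ y in Ici x, (y - x) ∂μ) - meanM μ

noncomputable def muT (t : ℝ) : Measure ℝ :=
  ENNReal.ofReal (1 / (1 + t)) • Measure.dirac (-t)
    + ENNReal.ofReal (t / (1 + t)) • Measure.dirac (1 - t)

/-!
Both families consist of two-point measures `p δ_a + q δ_b` with `a < b`, whose WDS function is
the step function equal to `0` up to `a`, to `-p a / q` on `(a, b)` and to `⊤` from `b` on.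
For `μ_t` the middle value is `1` and both jump points decrease in `t`, so the step functions
increase. After the translation the middle value becomes `(1 + t) / t`, which decreases in `t`:
at `x = -7/4` the WDS function of `μ̂_1` is `2` while that of `μ̂_{3/2}` is `5/3`.
-/

noncomputable def wdsStep (a b v x : ℝ) : EReal :=
  if x ≤ a then ((0 : ℝ) : EReal) else if x < b then (v : EReal) else ⊤

lemma wdsStep_mono {a b v a' b' v' : ℝ} (ha : a' ≤ a) (hb : b' ≤ b) (hv' : 0 ≤ v')
    (hv : v ≤ v') (x : ℝ) : wdsStep a b v x ≤ wdsStep a' b' v' x := by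
  unfold wdsStep
  split_ifs <;> first
    | exact le_top
    | exact EReal.coe_le_coe_iff.mpr (by linarith)
    | (exfalso; linarith)

noncomputable def twoPointMeasure (p q a b : ℝ) : Measure ℝ :=
  ENNReal.ofReal p • Measure.dirac a + ENNReal.ofReal q • Measure.dirac b

section TwoPoint

variable {p q a b : ℝ}

lemma integrable_ofReal_smul_dirac (f : ℝ → ℝ) (c y : ℝ) :
    Integrable f (ENNReal.ofReal c • Measure.dirac y) :=
  (integrable_dirac enorm_lt_top).smul_measure ENNReal.ofReal_ne_top

lemma twoPointMeasure_Ici (x : ℝ) :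
    twoPointMeasure p q a b (Ici x) =
      (if x ≤ a then ENNReal.ofReal p else 0) + (if x ≤ b then ENNReal.ofReal q else 0) := by
  simp [twoPointMeasure, Measure.dirac_apply' _ measurableSet_Ici, indicator_apply]

lemma meanM_twoPointMeasure (hp : 0 ≤ p) (hq : 0 ≤ q) :
    meanM (twoPointMeasure p q a b) = p * a + q * b := by
  rw [meanM, twoPointMeasure, integral_add_measure (integrable_ofReal_smul_dirac _ _ _)
    (integrable_ofReal_smul_dirac _ _ _), integral_smul_measure, integral_smul_measure,
    integral_dirac, integral_dirac, ENNReal.toReal_ofReal hp, ENNReal.toReal_ofReal hq,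
    smul_eq_mul, smul_eq_mul]

lemma setIntegral_Ici_twoPointMeasure (hp : 0 ≤ p) (hq : 0 ≤ q) (x : ℝ) :
    ∫ y in Ici x, y ∂(twoPointMeasure p q a b) =
      (if x ≤ a then p * a else 0) + (if x ≤ b then q * b else 0) := by
  rw [twoPointMeasure, Measure.restrict_add,
    integral_add_measure (integrable_ofReal_smul_dirac _ _ _).integrableOn
      (integrable_ofReal_smul_dirac _ _ _).integrableOn,
    Measure.restrict_smul, Measure.restrict_smul, integral_smul_measure, integral_smul_measure,
    setIntegral_dirac, setIntegral_dirac, ENNReal.toReal_ofReal hp, ENNReal.toReal_ofReal hq]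
  by_cases hxa : x ≤ a <;> by_cases hxb : x ≤ b <;> simp [hxa, hxb]

lemma rSupE_twoPointMeasure (hq : 0 < q) (hab : a < b) :
    rSupE (twoPointMeasure p q a b) = b := by
  have hnull : {z : ℝ | twoPointMeasure p q a b (Ici z) = 0} = Ioi b := by
    ext z
    by_cases hzb : z ≤ b
    · simp [twoPointMeasure_Ici, hzb, not_le.mpr hq]
    · simp [twoPointMeasure_Ici, hzb, not_le.mp hzb, show ¬ z ≤ a by linarith]
  rw [rSupE, hnull, EReal.image_coe_Ioi, csInf_Ioo (EReal.coe_lt_top b)]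

lemma psiWds_twoPointMeasure (hp : 0 ≤ p) (hq : 0 < q) (hab : a < b) :
    psiWds (twoPointMeasure p q a b) = wdsStep a b (-(p * a) / q) := by
  ext x
  rw [psiWds, wdsStep, rSupE_twoPointMeasure hq hab, meanM_twoPointMeasure hp hq.le,
    setIntegral_Ici_twoPointMeasure hp hq.le, twoPointMeasure_Ici]
  by_cases hxa : x ≤ a
  · simp [hxa, hxa.trans_lt hab, (hxa.trans_lt hab).le]
  by_cases hxb : x < b
  · simp [hxa, hxb, hxb.le, ENNReal.toReal_ofReal hq.le]
  · simp [hxa, hxb]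

end TwoPoint

lemma psiWds_muT {t : ℝ} (ht : 0 < t) : psiWds (muT t) = wdsStep (-t) (1 - t) 1 := by
  have h1t : 1 + t ≠ 0 := by positivity
  rw [show muT t = twoPointMeasure (1 / (1 + t)) (t / (1 + t)) (-t) (1 - t) from rfl,
    psiWds_twoPointMeasure (by positivity) (by positivity) (by linarith)]
  congr 1
  field_simp

lemma map_sub_one_muT (t : ℝ) :
    Measure.map (fun y => y - 1) (muT t) =
      twoPointMeasure (1 / (1 + t)) (t / (1 + t)) (-t - 1) (-t) := by
  have hm : Measurable (fun y : ℝ => y - 1) := measurable_id.sub_const 1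
  rw [muT, Measure.map_add _ _ hm, Measure.map_smul, Measure.map_smul,
    Measure.map_dirac' hm, Measure.map_dirac' hm, twoPointMeasure]
  norm_num

lemma psiWds_map_sub_one_muT {t : ℝ} (ht : 0 < t) :
    psiWds (Measure.map (fun y => y - 1) (muT t)) = wdsStep (-t - 1) (-t) ((1 + t) / t) := by
  have h1t : 1 + t ≠ 0 := by positivity
  rw [map_sub_one_muT, psiWds_twoPointMeasure (by positivity) (by positivity) (by linarith)]
  congr 1
  field_simp
  ring

theorem stmt19 :
    (∀ s t : ℝ, 0 < s → s ≤ t → ∀ x : ℝ, psiWds (muT s) x ≤ psiWds (muT t) x) ∧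
    ¬ (∀ s t : ℝ, 0 < s → s ≤ t → ∀ x : ℝ,
        psiWds (Measure.map (fun y => y - 1) (muT s)) x ≤
          psiWds (Measure.map (fun y => y - 1) (muT t)) x) := by
  refine ⟨fun s t hs hst x => ?_, fun hmono => ?_⟩
  · rw [psiWds_muT hs, psiWds_muT (hs.trans_le hst)]
    exact wdsStep_mono (by linarith) (by linarith) zero_le_one le_rfl x
  · have h := hmono 1 (3 / 2) one_pos (by norm_num) (-7 / 4)
    rw [psiWds_map_sub_one_muT one_pos, psiWds_map_sub_one_muT (by norm_num)] at h
    norm_num [wdsStep] at h
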